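/- Under the Setup with Hypotheses (H2) and (H3), for every w ∈ adh(L) one has lim_{n→∞} val_S(w[0,n−1]) / v_{q₀}(n) = α_w, where α_w := lim_{ℓ→∞} α_{w[0,ℓ−1]}. -/

import Mathlib

open Filter Topology

/-- The prefix of length `ℓ` of an infinite word `w : ℕ → A`. -/
def prefixOf {A : Type*} (w : ℕ → A) (ℓ : ℕ) : List A := List.ofFn (fun i : Fin ℓ => w i)

/-- The set of prefixes of words of a language `L`. -/
def pref {A : Type*} (L : Set (List A)) : Set (List A) := {u | ∃ v ∈ L, u <+: v}

/-- The adherence of a language. -/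
def adh {A : Type*} (L : Set (List A)) : Set (ℕ → A) :=
  {w | ∀ ℓ : ℕ, prefixOf w ℓ ∈ pref L}

/-- The center of a language: the finite prefixes of elements of the adherence. -/
def centre {A : Type*} (L : Set (List A)) : Set (List A) :=
  {u | ∃ w ∈ adh L, u = prefixOf w u.length}

/-- Transition function of a deterministic automaton extended to words. -/
def deltaStar {Q A : Type*} (δ : Q → A → Q) (q : Q) (w : List A) : Q := w.foldl δ q

/-- `ucomp δ F q n` : number of words of length `n` accepted from state `q`. -/
noncomputable def ucomp {Q A : Type*} (δ : Q → A → Q) (F : Set Q) (q : Q) (n : ℕ) : ℕ :=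
  {z : List A | z.length = n ∧ deltaStar δ q z ∈ F}.ncard

/-- `vcomp δ F q n` : number of words of length at most `n` accepted from state `q`. -/
noncomputable def vcomp {Q A : Type*} (δ : Q → A → Q) (F : Set Q) (q : Q) (n : ℕ) : ℕ :=
  ∑ m ∈ Finset.range (n + 1), ucomp δ F q m

open scoped Classical in
/-- For a word `y`, `alphaFin L r y = s₀ + Σ_{x ∈ centre(L), |x| = |y|, x <_lex y} r x`
where `s₀ = 1 - r ε`.  (Words of length `|y|` are enumerated as `List.ofFn f`
for `f : Fin |y| → A`.) -/
noncomputable def alphaFin {A : Type*} [Fintype A] [LinearOrder A]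
    (L : Set (List A)) (r : List A → ℝ) (y : List A) : ℝ :=
  (1 - r []) +
    ∑ f : Fin y.length → A,
      if List.ofFn f ∈ centre L ∧ List.Lex (· < ·) (List.ofFn f) y then r (List.ofFn f)
      else 0

/-- Genealogical (radix) order: first by length, then lexicographically. -/
def genLt {A : Type*} [LinearOrder A] (x y : List A) : Prop :=
  x.length < y.length ∨ (x.length = y.length ∧ List.Lex (· < ·) x y)

/-- The `S`-numerical value of a word `w` of `L`: the number of words of `L`
genealogically smaller than `w`. -/
noncomputable def valS {A : Type*} [LinearOrder A] (L : Set (List A)) (w : List A) : ℕ :=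
  {x ∈ L | genLt x w}.ncard

/-!
Group the words of `L` genealogically below `w[0,n)` by their length and, for those of length
`n`, by the first position `i` where they leave `w`:
`val_S(w[0,n)) = Σ_{m<n} u(m) + Σ_{i<n} Σ_{a<w_i} u_{δ(q₀, w[0,i)a)}(n-i-1)`.
Divided by `v(n)`, the first sum tends to `1 - r_ε` and each term of the second to `r_{w[0,i)a}`
by (H2). The terms with `i ≥ k` count words extending `w[0,k)`, so together they are at most
`u_{δ(q₀,w[0,k))}(n-k)/v(n) → r_{w[0,k)}`, which vanishes as `k → ∞` by (H3). With `1 - r_ε`, the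
limits of the terms with `i < k` add up to `α_{w[0,k)}`: `r` is additive (`r_x = Σ_a r_{xa}`) and
vanishes off the centre by Kőnig's lemma, so the sum defining `α_{w[0,k)}` splits by the same
first position.
-/

open Finset
open scoped Classical

section Words

variable {Γ : Type*}

theorem prefixOf_length (w : ℕ → Γ) (n : ℕ) : (prefixOf w n).length = n :=
  List.length_ofFn

theorem prefixOf_zero (w : ℕ → Γ) : prefixOf w 0 = [] := rfl

theorem prefixOf_succ_eq_cons (w : ℕ → Γ) (n : ℕ) :
    prefixOf w (n + 1) = w 0 :: prefixOf (fun i => w (i + 1)) n := by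
  simp [prefixOf, List.ofFn_succ]

theorem prefixOf_add (w : ℕ → Γ) (k j : ℕ) :
    prefixOf w (k + j) = prefixOf w k ++ prefixOf (fun i => w (k + i)) j := by
  refine List.ext_getElem (by simp [prefixOf]) fun i h₁ _ => ?_
  simp only [prefixOf, List.getElem_append, List.length_ofFn, List.getElem_ofFn]
  split_ifs with h
  · rfl
  · simp only [prefixOf, List.length_ofFn] at h₁
    congr 1
    omega

theorem prefixOf_prefix (w : ℕ → Γ) {k m : ℕ} (h : k ≤ m) : prefixOf w k <+: prefixOf w m := by
  obtain ⟨j, rfl⟩ := Nat.exists_eq_add_of_le h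
  exact prefixOf_add w k j ▸ List.prefix_append _ _

theorem prefixOf_mem_of_mem_adh {L : Set (List Γ)} (hpc : pref L = L) {w : ℕ → Γ}
    (hw : w ∈ adh L) (n : ℕ) : prefixOf w n ∈ L :=
  hpc ▸ hw n

variable [Fintype Γ] {M : Type*} [AddCommMonoid M]

theorem sum_ofFn_succ (G : List Γ → M) (n : ℕ) :
    ∑ f : Fin (n + 1) → Γ, G (List.ofFn f) = ∑ a : Γ, ∑ f : Fin n → Γ, G (a :: List.ofFn f) := by
  rw [← Fintype.sum_prod_type', ← (Fin.consEquiv fun _ => Γ).sum_comp]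
  simp [Fin.consEquiv, List.ofFn_succ]

def sumExtensions (G : List Γ → M) (y : List Γ) (m : ℕ) : M :=
  ∑ f : Fin m → Γ, G (y ++ List.ofFn f)

theorem sumExtensions_zero (G : List Γ → M) (y : List Γ) : sumExtensions G y 0 = G y := by
  simp [sumExtensions]

theorem sumExtensions_succ (G : List Γ → M) (y : List Γ) (m : ℕ) :
    sumExtensions G y (m + 1) = ∑ a : Γ, sumExtensions G (y ++ [a]) m := by
  rw [sumExtensions, sum_ofFn_succ (fun z => G (y ++ z))]
  simp [sumExtensions]

theorem sumExtensions_eq_self {G : List Γ → M} (hG : ∀ x, G x = ∑ a : Γ, G (x ++ [a]))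
    (y : List Γ) (m : ℕ) : sumExtensions G y m = G y := by
  induction m generalizing y with
  | zero => exact sumExtensions_zero G y
  | succ m ih => simp only [sumExtensions_succ, ih, ← hG]

variable [LinearOrder Γ]

theorem sum_lex_prefixOf (G : List Γ → M) (g : ℕ → Γ) (n : ℕ) :
    ∑ f : Fin n → Γ, (if List.Lex (· < ·) (List.ofFn f) (prefixOf g n) then G (List.ofFn f) else 0)
      = ∑ i ∈ range n, ∑ a ∈ univ.filter (· < g i),
          sumExtensions G (prefixOf g i ++ [a]) (n - (i + 1)) := by
  induction n generalizing G g with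
  | zero => simp [prefixOf_zero, List.not_lex_nil]
  | succ n ih =>
    have hsplit : ∀ a : Γ, (∑ f : Fin n → Γ,
        if List.Lex (· < ·) (a :: List.ofFn f) (g 0 :: prefixOf (fun i => g (i + 1)) n)
        then G (a :: List.ofFn f) else 0)
        = (if a < g 0 then sumExtensions G [a] n else 0) + if a = g 0 then
            ∑ f : Fin n → Γ, (if List.Lex (· < ·) (List.ofFn f) (prefixOf (fun i => g (i + 1)) n)
              then G (g 0 :: List.ofFn f) else 0) else 0 := by
      intro a
      rcases lt_trichotomy a (g 0) with h | rfl | h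
      · simp [List.cons_lex_cons_iff, h, h.ne, sumExtensions]
      · simp [List.cons_lex_cons_iff]
      · simp [List.cons_lex_cons_iff, h.ne', not_lt_of_gt h]
    rw [sum_ofFn_succ (fun z => if List.Lex (· < ·) z (prefixOf g (n + 1)) then G z else 0),
      prefixOf_succ_eq_cons, sum_congr rfl fun a _ => hsplit a, sum_add_distrib,
      sum_ite_eq', ← sum_filter, if_pos (mem_univ _), ih (fun z => G (g 0 :: z)), sum_range_succ',
      add_comm]
    congr 1
    refine sum_congr rfl fun i _ => sum_congr rfl fun a _ => ?_
    rw [prefixOf_succ_eq_cons, Nat.add_sub_add_right]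
    simp [sumExtensions]

end Words

section Counting

variable {Γ : Type*} {Q : Type*}

theorem deltaStar_append (δ : Q → Γ → Q) (q : Q) (x y : List Γ) :
    deltaStar δ q (x ++ y) = deltaStar δ (deltaStar δ q x) y :=
  List.foldl_append

theorem ucomp_le_vcomp (δ : Q → Γ → Q) (F : Set Q) (q : Q) (n : ℕ) :
    ucomp δ F q n ≤ vcomp δ F q n :=
  single_le_sum (fun _ _ => Nat.zero_le _) (self_mem_range_succ n)

variable [Fintype Γ]

theorem ucomp_pos (δ : Q → Γ → Q) (F : Set Q) (q : Q) {x : List Γ} (hx : deltaStar δ q x ∈ F) :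
    0 < ucomp δ F q x.length :=
  (Set.ncard_pos ((List.finite_length_eq Γ _).subset fun _ hz => hz.1)).2 ⟨x, rfl, hx⟩

theorem vcomp_pos {δ : Q → Γ → Q} {F : Set Q} {q : Q} {w : ℕ → Γ}
    (hpc : pref {x | deltaStar δ q x ∈ F} = {x | deltaStar δ q x ∈ F})
    (hw : w ∈ adh {x | deltaStar δ q x ∈ F}) (n : ℕ) : (0 : ℝ) < vcomp δ F q n := by
  have hu := ucomp_pos δ F q (prefixOf_mem_of_mem_adh hpc hw n)
  rw [prefixOf_length] at hu
  exact_mod_cast hu.trans_le (ucomp_le_vcomp δ F q n)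

theorem ncard_length_eq_and (P : List Γ → Prop) (m : ℕ) :
    {z : List Γ | z.length = m ∧ P z}.ncard
      = ∑ f : Fin m → Γ, if P (List.ofFn f) then 1 else 0 := by
  have himage :
      {z : List Γ | z.length = m ∧ P z} = List.ofFn '' {f : Fin m → Γ | P (List.ofFn f)} := by
    ext z
    constructor
    · rintro ⟨rfl, hz⟩
      exact ⟨z.get, by simpa using hz, List.ofFn_get z⟩
    · rintro ⟨f, hf, rfl⟩
      exact ⟨List.length_ofFn, hf⟩
  rw [himage, Set.ncard_image_of_injective _ List.ofFn_injective, Set.ncard_eq_toFinset_card',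
    Set.toFinset_ofPred, card_filter]

theorem ncard_length_lt_and (P : List Γ → Prop) (n : ℕ) :
    {z : List Γ | z.length < n ∧ P z}.ncard
      = ∑ m ∈ range n, {z : List Γ | z.length = m ∧ P z}.ncard := by
  induction n with
  | zero => simp
  | succ n ih =>
    have hsplit : {z : List Γ | z.length < n + 1 ∧ P z}
        = {z | z.length < n ∧ P z} ∪ {z | z.length = n ∧ P z} := by
      ext z
      simp only [Set.mem_ofPred_eq, Set.mem_union, Nat.lt_succ_iff_lt_or_eq, or_and_right]
    rw [hsplit, Set.ncard_union_eq (Set.disjoint_left.2 fun z h₁ h₂ => h₁.1.ne h₂.1)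
      ((List.finite_length_lt Γ n).subset fun z hz => hz.1)
      ((List.finite_length_eq Γ n).subset fun z hz => hz.1), ih, sum_range_succ]

theorem ucomp_deltaStar (δ : Q → Γ → Q) (F : Set Q) (q : Q) (y : List Γ) (m : ℕ) :
    ucomp δ F (deltaStar δ q y) m
      = sumExtensions (fun x => if deltaStar δ q x ∈ F then 1 else 0) y m := by
  simp [ucomp, ncard_length_eq_and, sumExtensions, deltaStar_append]

theorem ucomp_deltaStar_succ (δ : Q → Γ → Q) (F : Set Q) (q : Q) (y : List Γ) (m : ℕ) :
    ucomp δ F (deltaStar δ q y) (m + 1) = ∑ a : Γ, ucomp δ F (deltaStar δ q (y ++ [a])) m := by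
  simp only [ucomp_deltaStar, sumExtensions_succ]

variable [LinearOrder Γ]

theorem valS_eq (L : Set (List Γ)) (y : List Γ) :
    valS L y = ∑ m ∈ range y.length, {z : List Γ | z.length = m ∧ z ∈ L}.ncard
      + {z : List Γ | z.length = y.length ∧ z ∈ L ∧ List.Lex (· < ·) z y}.ncard := by
  have hsplit : {x ∈ L | genLt x y} = {z : List Γ | z.length < y.length ∧ z ∈ L}
      ∪ {z | z.length = y.length ∧ z ∈ L ∧ List.Lex (· < ·) z y} := by
    ext z
    simp only [genLt, Set.mem_union, Set.mem_ofPred_eq]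
    tauto
  rw [valS, hsplit, Set.ncard_union_eq (Set.disjoint_left.2 fun z h₁ h₂ => h₁.1.ne h₂.1)
    ((List.finite_length_lt Γ _).subset fun z hz => hz.1)
    ((List.finite_length_eq Γ _).subset fun z hz => hz.1), ncard_length_lt_and]

noncomputable def lexCount (δ : Q → Γ → Q) (F : Set Q) (q : Q) (g : ℕ → Γ) (n : ℕ) : ℕ :=
  {z : List Γ | z.length = n ∧ deltaStar δ q z ∈ F ∧ List.Lex (· < ·) z (prefixOf g n)}.ncard

theorem valS_prefixOf (δ : Q → Γ → Q) (F : Set Q) (q : Q) (g : ℕ → Γ) (n : ℕ) :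
    valS {x | deltaStar δ q x ∈ F} (prefixOf g n)
      = ∑ m ∈ range n, ucomp δ F q m + lexCount δ F q g n := by
  rw [valS_eq, prefixOf_length]
  rfl

theorem lexCount_le_ucomp (δ : Q → Γ → Q) (F : Set Q) (q : Q) (g : ℕ → Γ) (n : ℕ) :
    lexCount δ F q g n ≤ ucomp δ F q n :=
  Set.ncard_le_ncard (fun _ hz => ⟨hz.1, hz.2.1⟩)
    ((List.finite_length_eq Γ n).subset fun _ hz => hz.1)

theorem lexCount_eq_sum (δ : Q → Γ → Q) (F : Set Q) (q : Q) (g : ℕ → Γ) (n : ℕ) :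
    lexCount δ F q g n = ∑ i ∈ range n, ∑ a ∈ univ.filter (· < g i),
      ucomp δ F (deltaStar δ q (prefixOf g i ++ [a])) (n - (i + 1)) := by
  simp only [lexCount, ncard_length_eq_and, ucomp_deltaStar, ← sum_lex_prefixOf]
  refine sum_congr rfl fun f _ => ?_
  by_cases hlex : List.Lex (· < ·) (List.ofFn f) (prefixOf g n) <;> simp [hlex]

theorem sum_Ico_eq_lexCount (δ : Q → Γ → Q) (F : Set Q) (q : Q) (g : ℕ → Γ) (k n : ℕ) :
    ∑ i ∈ Ico k n, ∑ a ∈ univ.filter (· < g i),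
        ucomp δ F (deltaStar δ q (prefixOf g i ++ [a])) (n - (i + 1))
      = lexCount δ F (deltaStar δ q (prefixOf g k)) (fun j => g (k + j)) (n - k) := by
  rw [lexCount_eq_sum, sum_Ico_eq_sum_range]
  refine sum_congr rfl fun j _ => sum_congr rfl fun a _ => ?_
  rw [prefixOf_add, List.append_assoc, deltaStar_append, Nat.sub_sub, add_assoc]

theorem valS_add_ucomp_eq (δ : Q → Γ → Q) (F : Set Q) (q : Q) (g : ℕ → Γ) {k n : ℕ}
    (hk : k ≤ n) :
    valS {x | deltaStar δ q x ∈ F} (prefixOf g n) + ucomp δ F q n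
      = vcomp δ F q n + ∑ i ∈ range k, ∑ a ∈ univ.filter (· < g i),
          ucomp δ F (deltaStar δ q (prefixOf g i ++ [a])) (n - (i + 1))
        + lexCount δ F (deltaStar δ q (prefixOf g k)) (fun j => g (k + j)) (n - k) := by
  rw [valS_prefixOf, lexCount_eq_sum, vcomp, sum_range_succ, ← sum_Ico_eq_lexCount,
    add_assoc _ (∑ i ∈ range k, _), sum_range_add_sum_Ico _ hk]
  ring

end Counting

section Centre

variable {Γ : Type*}

theorem prefixOf_getD (y : List Γ) (d : Γ) {k : ℕ} (hk : k ≤ y.length) :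
    prefixOf (fun i => y.getD i d) k = y.take k := by
  refine List.ext_getElem (by simp [prefixOf, hk]) fun i h₁ _ => ?_
  simp only [prefixOf, List.length_ofFn] at h₁
  simp [prefixOf, List.getD, List.getElem?_eq_getElem (by omega : i < y.length)]

theorem isClosed_setOf_prefixOf_mem [TopologicalSpace Γ] [DiscreteTopology Γ]
    (S : Set (List Γ)) (k : ℕ) : IsClosed {ω : ℕ → Γ | prefixOf ω k ∈ S} :=
  (isClosed_discrete {f : Fin k → Γ | List.ofFn f ∈ S}).preimage
    (f := fun (ω : ℕ → Γ) (i : Fin k) => ω i) (continuous_pi fun i => continuous_apply (i : ℕ))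

/-- Kőnig's lemma, via compactness of `ℕ → Γ`. -/
theorem mem_centre_of_forall_exists_append_mem [Finite Γ] {L : Set (List Γ)} (hpc : pref L = L)
    {x : List Γ} (h : ∀ m, ∃ z : List Γ, z.length = m ∧ x ++ z ∈ L) : x ∈ centre L := by
  obtain ⟨d⟩ : Nonempty Γ := by
    obtain ⟨z, hz, -⟩ := h 1
    exact ⟨z.head (List.ne_nil_of_length_eq_add_one hz)⟩
  let _ : TopologicalSpace Γ := ⊥
  have : DiscreteTopology Γ := ⟨rfl⟩
  let C : ℕ → Set (ℕ → Γ) := fun n =>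
    {ω | prefixOf ω x.length ∈ ({x} : Set (List Γ))} ∩ {ω | prefixOf ω n ∈ L}
  have hclosed : ∀ n, IsClosed (C n) := fun n =>
    (isClosed_setOf_prefixOf_mem _ _).inter (isClosed_setOf_prefixOf_mem _ _)
  have hanti : ∀ n, C (n + 1) ⊆ C n := fun n ω hω =>
    ⟨hω.1, hpc ▸ ⟨_, hω.2, prefixOf_prefix ω n.le_succ⟩⟩
  have hne : ∀ n, (C n).Nonempty := by
    intro n
    obtain ⟨z, hz, hxz⟩ := h n
    refine ⟨fun i => (x ++ z).getD i d, ?_, ?_⟩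
    · rw [Set.mem_ofPred_eq, prefixOf_getD _ _ (by simp), List.take_left]
      rfl
    · rw [Set.mem_ofPred_eq, prefixOf_getD _ _ (by simp [hz]), ← hpc]
      exact ⟨_, hxz, List.take_prefix _ _⟩
  obtain ⟨ω, hω⟩ := IsCompact.nonempty_iInter_of_sequence_nonempty_isCompact_isClosed C hanti hne
    (hclosed 0).isCompact hclosed
  rw [Set.mem_iInter] at hω
  exact ⟨ω, fun n => hpc.symm ▸ (hω n).2, ((hω 0).1).symm⟩

end Centre

section Density

variable {Γ : Type*} [Fintype Γ] {Q : Type*} {δ : Q → Γ → Q} {F : Set Q} {q : Q}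
  {D : ℕ → ℝ} {r : List Γ → ℝ}

theorem eq_sum_append_of_tendsto
    (hr : ∀ x : List Γ, Tendsto (fun n => (ucomp δ F (deltaStar δ q x) (n - x.length) : ℝ) / D n)
      atTop (𝓝 (r x)))
    (x : List Γ) : r x = ∑ a : Γ, r (x ++ [a]) := by
  refine tendsto_nhds_unique (hr x) ((tendsto_finsetSum univ fun a _ => hr (x ++ [a])).congr' ?_)
  filter_upwards [eventually_gt_atTop x.length] with n hn
  obtain ⟨m, hm⟩ : ∃ m, n - x.length = m + 1 := ⟨n - (x.length + 1), by omega⟩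
  have hlen : ∀ a : Γ, n - (x ++ [a]).length = m := fun a => by
    rw [List.length_append, List.length_singleton]
    omega
  simp only [← sum_div, hm, hlen, ucomp_deltaStar_succ, Nat.cast_sum]

theorem eq_zero_of_tendsto_of_notMem_centre
    (hpc : pref {x | deltaStar δ q x ∈ F} = {x | deltaStar δ q x ∈ F})
    (hr : ∀ x : List Γ, Tendsto (fun n => (ucomp δ F (deltaStar δ q x) (n - x.length) : ℝ) / D n)
      atTop (𝓝 (r x)))
    {x : List Γ} (hx : x ∉ centre {x | deltaStar δ q x ∈ F}) : r x = 0 := by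
  obtain ⟨m, hm⟩ : ∃ m, ∀ z : List Γ, z.length = m → deltaStar δ q (x ++ z) ∉ F := by
    by_contra! h
    exact hx (mem_centre_of_forall_exists_append_mem hpc h)
  have hzero : ∀ n ≥ x.length + m, ucomp δ F (deltaStar δ q x) (n - x.length) = 0 := by
    intro n hn
    refine (Set.ncard_eq_zero ((List.finite_length_eq Γ _).subset fun _ hz => hz.1)).2 ?_
    refine Set.eq_empty_of_forall_notMem fun z ⟨hz, hzF⟩ =>
      hm (z.take m) (by rw [List.length_take]; omega) ?_
    have hpref : x ++ z.take m ∈ pref {x | deltaStar δ q x ∈ F} :=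
      ⟨x ++ z, by rwa [Set.mem_ofPred_eq, deltaStar_append],
        (List.prefix_append_right_inj x).2 (List.take_prefix m z)⟩
    rwa [hpc] at hpref
  refine tendsto_nhds_unique (hr x) (tendsto_const_nhds.congr' ?_)
  filter_upwards [eventually_ge_atTop (x.length + m)] with n hn
  simp [hzero n hn]

variable [LinearOrder Γ]

theorem alphaFin_prefixOf {L : Set (List Γ)} (hzero : ∀ x, x ∉ centre L → r x = 0)
    (hr : ∀ x, r x = ∑ a : Γ, r (x ++ [a])) (w : ℕ → Γ) (ℓ : ℕ) :
    alphaFin L r (prefixOf w ℓ)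
      = 1 - r [] + ∑ i ∈ range ℓ, ∑ a ∈ univ.filter (· < w i), r (prefixOf w i ++ [a]) := by
  have hlex := sum_lex_prefixOf r w ℓ
  simp only [sumExtensions_eq_self hr] at hlex
  rw [alphaFin, ← hlex, prefixOf_length]
  congr 1
  refine sum_congr rfl fun f _ => ?_
  by_cases hc : List.ofFn f ∈ centre L <;> simp [hc, hzero]

end Density

theorem tendsto_of_dist_le_of_tendsto {ι E : Type*} [PseudoMetricSpace E] {l : Filter ι}
    {f : ι → E} {A : ℕ → ι → E} {U : ℕ → ι → ℝ} {α : ℕ → E} {e : ℕ → ℝ} {a : E}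
    (hA : ∀ k, Tendsto (A k) l (𝓝 (α k))) (hU : ∀ k, Tendsto (U k) l (𝓝 (e k)))
    (hfA : ∀ k, ∀ᶠ n in l, dist (f n) (A k n) ≤ U k n)
    (hα : Tendsto α atTop (𝓝 a)) (he : Tendsto e atTop (𝓝 0)) : Tendsto f l (𝓝 a) := by
  refine Metric.tendsto_nhds.2 fun ε hε => ?_
  obtain ⟨k, hαk, hek⟩ := ((Metric.tendsto_nhds.1 hα (ε / 4) (by positivity)).and
    (he.eventually_lt_const (by positivity : (0 : ℝ) < ε / 4))).exists
  filter_upwards [hfA k, Metric.tendsto_nhds.1 (hA k) (ε / 4) (by positivity),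
    (hU k).eventually_lt_const (by linarith : e k < ε / 2)] with n h₁ h₂ h₃
  calc dist (f n) a ≤ dist (f n) (A k n) + dist (A k n) (α k) + dist (α k) a :=
        dist_triangle4 _ _ _ _
    _ < ε := by linarith

section Approximation

variable {Γ : Type*} [Fintype Γ] [LinearOrder Γ] {Q : Type*} {δ : Q → Γ → Q} {F : Set Q}
  {q : Q} {w : ℕ → Γ}

/-- `valS (prefixOf w n) / vcomp n`, leaving out the words of length `n` that leave `w` at a
position `≥ k`. -/
noncomputable def valApprox (δ : Q → Γ → Q) (F : Set Q) (q : Q) (w : ℕ → Γ) (k n : ℕ) : ℝ :=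
  ((vcomp δ F q n : ℝ) - ucomp δ F q n + ∑ i ∈ range k, ∑ a ∈ univ.filter (· < w i),
    (ucomp δ F (deltaStar δ q (prefixOf w i ++ [a])) (n - (i + 1)) : ℝ)) / vcomp δ F q n

theorem tendsto_valApprox {r : List Γ → ℝ}
    (hpc : pref {x | deltaStar δ q x ∈ F} = {x | deltaStar δ q x ∈ F})
    (hr : ∀ x : List Γ, Tendsto (fun n =>
      (ucomp δ F (deltaStar δ q x) (n - x.length) : ℝ) / vcomp δ F q n) atTop (𝓝 (r x)))
    (hv : ∀ n, (0 : ℝ) < vcomp δ F q n) (k : ℕ) :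
    Tendsto (valApprox δ F q w k) atTop
      (𝓝 (alphaFin {x | deltaStar δ q x ∈ F} r (prefixOf w k))) := by
  rw [alphaFin_prefixOf (fun _ => eq_zero_of_tendsto_of_notMem_centre hpc hr)
    (eq_sum_append_of_tendsto hr)]
  have hterm : ∀ i (a : Γ), Tendsto (fun n =>
      (ucomp δ F (deltaStar δ q (prefixOf w i ++ [a])) (n - (i + 1)) : ℝ) / vcomp δ F q n)
      atTop (𝓝 (r (prefixOf w i ++ [a]))) := fun i a => by
    simpa [prefixOf_length] using hr (prefixOf w i ++ [a])
  refine (((hr []).const_sub 1).add (tendsto_finsetSum _ fun i _ =>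
    tendsto_finsetSum _ fun a _ => hterm i a)).congr' ?_
  filter_upwards with n
  simp [valApprox, add_div, sub_div, div_self (hv n).ne', sum_div, deltaStar]

theorem dist_valS_div_valApprox_le (hv : ∀ n, (0 : ℝ) < vcomp δ F q n) {k n : ℕ} (hk : k ≤ n) :
    dist ((valS {x | deltaStar δ q x ∈ F} (prefixOf w n) : ℝ) / vcomp δ F q n)
        (valApprox δ F q w k n)
      ≤ (ucomp δ F (deltaStar δ q (prefixOf w k)) (n - k) : ℝ) / vcomp δ F q n := by
  have hsplit : (valS {x | deltaStar δ q x ∈ F} (prefixOf w n) : ℝ) + ucomp δ F q n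
      = vcomp δ F q n + ∑ i ∈ range k, ∑ a ∈ univ.filter (· < w i),
          (ucomp δ F (deltaStar δ q (prefixOf w i ++ [a])) (n - (i + 1)) : ℝ)
        + lexCount δ F (deltaStar δ q (prefixOf w k)) (fun j => w (k + j)) (n - k) := by
    exact_mod_cast valS_add_ucomp_eq δ F q w hk
  have hle : (lexCount δ F (deltaStar δ q (prefixOf w k)) (fun j => w (k + j)) (n - k) : ℝ)
      ≤ ucomp δ F (deltaStar δ q (prefixOf w k)) (n - k) := by
    exact_mod_cast lexCount_le_ucomp δ F _ _ _
  have hnonneg := Nat.cast_nonneg (α := ℝ)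
    (lexCount δ F (deltaStar δ q (prefixOf w k)) (fun j => w (k + j)) (n - k))
  rw [valApprox, Real.dist_eq, ← sub_div, abs_div, abs_of_pos (hv n)]
  gcongr
  exact abs_le.2 ⟨by linarith, by linarith⟩

end Approximation

theorem stmt_13_general {Γ : Type*} [Fintype Γ] [LinearOrder Γ]
    (L : Set (List Γ)) (hpc : pref L = L)
    {Q : Type*} (q0 : Q) (δ : Q → Γ → Q) (F : Set Q)
    (hL : L = {x | deltaStar δ q0 x ∈ F})
    (r : List Γ → ℝ)
    (hH2 : ∀ x : List Γ,
      Tendsto (fun n : ℕ =>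
          (ucomp δ F (deltaStar δ q0 x) (n - x.length) : ℝ) / (vcomp δ F q0 n : ℝ))
        atTop (𝓝 (r x)))
    (hH3 : ∀ w ∈ adh L, Tendsto (fun ℓ : ℕ => r (prefixOf w ℓ)) atTop (𝓝 0))
    (w : ℕ → Γ) (hw : w ∈ adh L) (aw : ℝ)
    (haw : Tendsto (fun ℓ : ℕ => alphaFin L r (prefixOf w ℓ)) atTop (𝓝 aw)) :
    Tendsto (fun n : ℕ => (valS L (prefixOf w n) : ℝ) / (vcomp δ F q0 n : ℝ))
      atTop (𝓝 aw) := by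
  subst hL
  have hv := vcomp_pos hpc hw
  exact tendsto_of_dist_le_of_tendsto (tendsto_valApprox hpc hH2 hv)
    (fun k => by simpa [prefixOf_length] using hH2 (prefixOf w k))
    (fun k => (eventually_ge_atTop k).mono fun _ hn => dist_valS_div_valApprox_le hv hn)
    haw (hH3 w hw)

theorem stmt_13 {Γ : Type*} [Fintype Γ] [LinearOrder Γ]
    (L : Set (List Γ)) (hLinf : L.Infinite) (hpc : pref L = L)
    {Q : Type*} (q0 : Q) (δ : Q → Γ → Q) (F : Set Q)
    (hacc : ∀ q : Q, ∃ x : List Γ, deltaStar δ q0 x = q)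
    (hL : L = {x | deltaStar δ q0 x ∈ F})
    (r : List Γ → ℝ)
    (hH2 : ∀ x : List Γ,
      Tendsto (fun n : ℕ =>
          (ucomp δ F (deltaStar δ q0 x) (n - x.length) : ℝ) / (vcomp δ F q0 n : ℝ))
        atTop (𝓝 (r x)))
    (hH3 : ∀ w ∈ adh L, Tendsto (fun ℓ : ℕ => r (prefixOf w ℓ)) atTop (𝓝 0))
    (w : ℕ → Γ) (hw : w ∈ adh L) (aw : ℝ)
    (haw : Tendsto (fun ℓ : ℕ => alphaFin L r (prefixOf w ℓ)) atTop (𝓝 aw)) :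
    Tendsto (fun n : ℕ => (valS L (prefixOf w n) : ℝ) / (vcomp δ F q0 n : ℝ))
      atTop (𝓝 aw) :=
  stmt_13_general L hpc q0 δ F hL r hH2 hH3 w hw aw haw
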